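/- arXiv:2511.03971 — 3 statements merged into one kernel-verified Lean document; each statement's English description precedes it below -/
import Mathlib

section
/- Let d be a positive natural number, σ > 0, and let n be a random vector in ℝ^d whose d coordinates are independent and identically distributed Gaussian random variables with mean 0 and variance σ². Fix r ∈ ℝ^d and let δ be any real number with δ > ‖r‖₂ + √d · σ. Then the probability of no alarm satisfies P(‖r + n‖₂ ≤ δ) ≥ 1 − exp(−(δ − ‖r‖₂ − √d σ)² / (2σ²)). -/
open MeasureTheory ProbabilityTheory Real
open scoped NNReal ENNReal

lemma gauss_sq_int {σ : ℝ} (hσ : 0 < σ) {t : ℝ} (ht : t < 1 / (2 * σ ^ 2)) :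
    Integrable (fun x => rexp (t * x ^ 2)) (gaussianReal 0 ⟨σ ^ 2, sq_nonneg σ⟩) ∧
    ∫ x, rexp (t * x ^ 2) ∂(gaussianReal 0 ⟨σ ^ 2, sq_nonneg σ⟩)
      = (Real.sqrt (1 - 2 * t * σ ^ 2))⁻¹ := by
  set v : ℝ≥0 := ⟨σ ^ 2, sq_nonneg σ⟩ with hv_def
  have hv : v ≠ 0 := by
    intro h
    have : (v : ℝ) = 0 := by rw [h]; simp
    simp only [hv_def, NNReal.coe_mk] at this
    nlinarith [show σ ^ 2 = 0 from this]
  have hσ2 : (0:ℝ) < σ ^ 2 := by positivity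
  set b : ℝ := 1 / (2 * σ ^ 2) - t with hb_def
  have hb : 0 < b := by simp only [hb_def]; linarith
  have hrw : gaussianReal 0 v
      = volume.withDensity (fun x => ((Real.toNNReal (gaussianPDFReal 0 v x) : ℝ≥0) : ℝ≥0∞)) := by
    rw [gaussianReal_of_var_ne_zero 0 hv]
    rfl
  have hfun : (fun x => gaussianPDFReal 0 v x * rexp (t * x ^ 2))
      = fun x => (Real.sqrt (2 * π * σ ^ 2))⁻¹ * rexp (-b * x ^ 2) := by
    funext x
    simp only [gaussianPDFReal, hv_def, NNReal.coe_mk]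
    rw [mul_assoc, ← Real.exp_add]
    congr 2
    have h2 : σ ^ 2 * σ⁻¹ ^ 2 = 1 := by field_simp
    change -(x - 0) ^ 2 / (2 * σ ^ 2) + t * x ^ 2 = -b * x ^ 2
    field_simp
    linear_combination x ^ 2 * h2
  have hint : Integrable (fun x => gaussianPDFReal 0 v x * rexp (t * x ^ 2)) volume := by
    rw [hfun]
    exact (integrable_exp_neg_mul_sq hb).const_mul _
  have hmeas : Measurable fun x => Real.toNNReal (gaussianPDFReal 0 v x) :=
    (measurable_gaussianPDFReal 0 v).real_toNNReal
  have hsmul : ∀ x : ℝ, (Real.toNNReal (gaussianPDFReal 0 v x) : ℝ≥0) • rexp (t * x ^ 2)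
      = gaussianPDFReal 0 v x * rexp (t * x ^ 2) := by
    intro x
    rw [NNReal.smul_def, smul_eq_mul, Real.coe_toNNReal _ (gaussianPDFReal_nonneg 0 v x)]
  constructor
  · rw [hrw, integrable_withDensity_iff_integrable_smul hmeas]
    simpa only [hsmul] using hint
  · rw [hrw, integral_withDensity_eq_integral_smul hmeas]
    simp_rw [hsmul]
    rw [hfun, MeasureTheory.integral_const_mul, integral_gaussian]
    have h1 : 1 - 2 * t * σ ^ 2 = 2 * σ ^ 2 * b := by simp only [hb_def]; field_simp
    rw [h1]
    rw [← Real.sqrt_inv, ← Real.sqrt_inv, ← Real.sqrt_mul (by positivity)]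
    congr 1
    have hπ : (0:ℝ) < π := Real.pi_pos
    field_simp

lemma pi_inter_preimage {d : ℕ} (ν : Measure ℝ) [IsProbabilityMeasure ν]
    (S : Finset (Fin d)) (sets : Fin d → Set ℝ) :
    Measure.pi (fun _ : Fin d => ν)
        (⋂ i ∈ S, (fun x : Fin d → ℝ => x i) ⁻¹' sets i)
      = ∏ i ∈ S, ν (sets i) := by
  classical
  have hset : (⋂ i ∈ S, (fun x : Fin d → ℝ => x i) ⁻¹' sets i)
      = Set.pi Set.univ (fun i => if i ∈ S then sets i else Set.univ) := by
    ext x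
    simp only [Set.mem_iInter, Set.mem_preimage, Set.mem_pi, Set.mem_univ, true_implies]
    constructor
    · intro h i
      by_cases hi : i ∈ S
      · simpa [hi] using h i hi
      · simp [hi]
    · intro h i hi
      have := h i
      simpa [hi] using this
  rw [hset, Measure.pi_pi]
  have : ∀ i : Fin d, ν (if i ∈ S then sets i else Set.univ)
      = if i ∈ S then ν (sets i) else 1 := by
    intro i; by_cases hi : i ∈ S <;> simp [hi]
  simp_rw [this]
  rw [Finset.prod_ite_mem Finset.univ S (fun i => ν (sets i)), Finset.univ_inter]

/-- Theorem 2 (Probabilistic Stealth Success Under Noise): if `n` is a random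
vector in `ℝ^d` with i.i.d. centered Gaussian coordinates of variance `σ²`,
`r ∈ ℝ^d` is fixed, and the threshold satisfies `δ > ‖r‖₂ + √d * σ`, then the
probability of no alarm satisfies
`P(‖r + n‖₂ ≤ δ) ≥ 1 - exp(-(δ - ‖r‖₂ - √d σ)² / (2σ²))`. -/
theorem probabilistic_stealth_success
    (d : ℕ) (hd : 0 < d) (σ : ℝ) (hσ : 0 < σ)
    (Ω : Type*) [MeasureSpace Ω] [IsProbabilityMeasure (ℙ : Measure Ω)]
    (n : Ω → EuclideanSpace ℝ (Fin d)) (hn : Measurable n)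
    (hdist : Measure.map (fun ω => WithLp.ofLp (n ω)) ℙ
      = Measure.pi (fun _ : Fin d => gaussianReal 0 ⟨σ ^ 2, sq_nonneg σ⟩))
    (r : EuclideanSpace ℝ (Fin d)) (δ : ℝ)
    (hδ : δ > ‖r‖ + Real.sqrt d * σ) :
    ℙ {ω | ‖r + n ω‖ ≤ δ}
      ≥ ENNReal.ofReal
          (1 - Real.exp (-(δ - ‖r‖ - Real.sqrt d * σ) ^ 2 / (2 * σ ^ 2))) := by
  classical
  set v : ℝ≥0 := ⟨σ ^ 2, sq_nonneg σ⟩ with hv_def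
  set ν : Measure ℝ := gaussianReal 0 v with hν_def
  set q : ℝ := Real.sqrt d with hq_def
  have hdpos : (0:ℝ) < d := by exact_mod_cast hd
  have hq0 : 0 < q := Real.sqrt_pos.mpr hdpos
  have hq2 : q ^ 2 = d := Real.sq_sqrt hdpos.le
  set D : ℝ := q * σ with hD_def
  have hD : 0 < D := by positivity
  set c : ℝ := δ - ‖r‖ with hc_def
  set s : ℝ := c - D with hs_def
  have hs : 0 < s := by simp only [hs_def, hc_def, hD_def]; linarith
  have hDc : D < c := by simp only [hs_def] at hs; linarith
  have hc0 : 0 < c := lt_trans hD hDc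
  have hσ2 : (0:ℝ) < σ ^ 2 := by positivity
  set t : ℝ := (c ^ 2 - D ^ 2) / (2 * σ ^ 2 * c ^ 2) with ht_def
  have hcD2 : 0 < c ^ 2 - D ^ 2 := by nlinarith
  have ht0 : 0 ≤ t := by
    apply div_nonneg hcD2.le (by positivity)
  have htlt : t < 1 / (2 * σ ^ 2) := by
    rw [ht_def, div_lt_div_iff₀ (by positivity) (by positivity)]
    nlinarith [mul_pos hσ2 (pow_pos hD 2)]
  have h1m : 1 - 2 * t * σ ^ 2 = D ^ 2 / c ^ 2 := by
    rw [ht_def]; field_simp; ring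
  -- coordinate functions
  set X : Fin d → Ω → ℝ := fun i ω => (n ω i) ^ 2 with hX_def
  have hn' : Measurable fun ω => WithLp.ofLp (n ω) := (WithLp.measurable_ofLp 2 _).comp hn
  have hn_i : ∀ i, Measurable fun ω => n ω i := fun i => (measurable_pi_apply i).comp hn'
  have hXm : ∀ i, Measurable (X i) := fun i => (hn_i i).pow_const 2
  -- preimage computation
  have hpre : ∀ (S : Finset (Fin d)) (sets : Fin d → Set ℝ), (∀ i ∈ S, MeasurableSet (sets i)) →
      ℙ (⋂ i ∈ S, (fun ω => n ω i) ⁻¹' sets i) = ∏ i ∈ S, ν (sets i) := by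
    intro S sets hsets
    have h1 : (⋂ i ∈ S, (fun ω => n ω i) ⁻¹' sets i)
        = (fun ω => WithLp.ofLp (n ω)) ⁻¹' (⋂ i ∈ S, (fun x : Fin d → ℝ => x i) ⁻¹' sets i) := by
      ext ω; simp
    have hms : MeasurableSet (⋂ i ∈ S, (fun x : Fin d → ℝ => x i) ⁻¹' sets i) :=
      MeasurableSet.biInter S.countable_toSet
        (fun i hi => (measurable_pi_apply i) (hsets i hi))
    rw [h1, ← Measure.map_apply hn' hms, hdist]
    exact pi_inter_preimage ν S sets
  -- independence of coordinates
  have hindep : iIndepFun (fun i ω => n ω i) ℙ := by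
    rw [iIndepFun_iff_measure_inter_preimage_eq_mul]
    intro S sets hsets
    rw [hpre S sets hsets]
    apply Finset.prod_congr rfl
    intro i hi
    have := hpre {i} sets (by simpa using hsets i hi)
    simpa using this.symm
  have hindep2 : iIndepFun X ℙ :=
    hindep.comp (fun _ => fun x : ℝ => x ^ 2) (fun _ => measurable_id.pow_const 2)
  -- marginal law
  have hmap : ∀ i, Measure.map (fun ω => n ω i) ℙ = ν := by
    intro i
    ext A hA
    rw [Measure.map_apply (hn_i i) hA]
    have := hpre {i} (fun _ => A) (by simp [hA])
    simpa using this
  -- per-coordinate integrability and mgf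
  have hint_i : ∀ i, Integrable (fun ω => rexp (t * X i ω)) ℙ := by
    intro i
    have h1 : Integrable (fun x => rexp (t * x ^ 2)) (Measure.map (fun ω => n ω i) ℙ) := by
      rw [hmap i, hν_def, hv_def]; exact (gauss_sq_int hσ htlt).1
    have := (integrable_map_measure h1.aestronglyMeasurable (hn_i i).aemeasurable).mp h1
    simpa [Function.comp_def, hX_def] using this
  have hmgf_i : ∀ i, mgf (X i) ℙ t = (Real.sqrt (1 - 2 * t * σ ^ 2))⁻¹ := by
    intro i
    have hsm : AEStronglyMeasurable (fun x : ℝ => rexp (t * x ^ 2))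
        (Measure.map (fun ω => n ω i) ℙ) :=
      (measurable_id.pow_const 2 |>.const_mul t |>.exp).aestronglyMeasurable
    have h2 : ∫ ω, rexp (t * X i ω) ∂ℙ
        = ∫ x, rexp (t * x ^ 2) ∂(Measure.map (fun ω => n ω i) ℙ) :=
      (integral_map (hn_i i).aemeasurable hsm).symm
    rw [mgf, h2, hmap i, hν_def, hv_def]
    exact (gauss_sq_int hσ htlt).2
  -- Chernoff
  have hintS : Integrable (fun ω => rexp (t * (∑ i ∈ Finset.univ, X i) ω)) ℙ :=
    hindep2.integrable_exp_mul_sum hXm (fun i _ => hint_i i)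
  have hcher := measure_ge_le_exp_mul_mgf (μ := ℙ) (X := ∑ i ∈ Finset.univ, X i)
    (c ^ 2) ht0 hintS
  rw [hindep2.mgf_sum hXm Finset.univ] at hcher
  have hprod : ∏ i ∈ Finset.univ, mgf (X i) ℙ t
      = ((Real.sqrt (1 - 2 * t * σ ^ 2))⁻¹) ^ d := by
    simp [hmgf_i, Finset.prod_const, Finset.card_univ]
  rw [hprod] at hcher
  -- the analytic bound
  have hsqrt : Real.sqrt (1 - 2 * t * σ ^ 2) = D / c := by
    rw [h1m, ← div_pow, Real.sqrt_sq (by positivity)]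
  have hBle : rexp (-t * c ^ 2) * ((Real.sqrt (1 - 2 * t * σ ^ 2))⁻¹) ^ d
      ≤ rexp (-s ^ 2 / (2 * σ ^ 2)) := by
    rw [hsqrt, inv_div]
    have hlog : Real.log (c / D) ≤ s / D := by
      have h := Real.log_le_sub_one_of_pos (x := c / D) (by positivity)
      have : c / D - 1 = s / D := by field_simp [hs_def]; exact hs_def.symm
      linarith [h, this.le, this.ge]
    have hpow : (c / D) ^ d = rexp ((d : ℝ) * Real.log (c / D)) := by
      rw [Real.exp_nat_mul, Real.exp_log (by positivity)]
    rw [hpow, ← Real.exp_add, Real.exp_le_exp]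
    have h2 : (d : ℝ) * Real.log (c / D) ≤ (d : ℝ) * (s / D) :=
      mul_le_mul_of_nonneg_left hlog (by positivity)
    have h3 : (d : ℝ) * (s / D) = D * s / σ ^ 2 := by
      rw [← hq2, hD_def]; field_simp
    have h4 : t * c ^ 2 = (2 * D * s + s ^ 2) / (2 * σ ^ 2) := by
      rw [ht_def, hs_def]; field_simp; ring
    have key : (d : ℝ) * Real.log (c / D) ≤ t * c ^ 2 - s ^ 2 / (2 * σ ^ 2) := by
      rw [h4]
      calc (d : ℝ) * Real.log (c / D) ≤ D * s / σ ^ 2 := by rw [← h3]; exact h2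
        _ = (2 * D * s + s ^ 2) / (2 * σ ^ 2) - s ^ 2 / (2 * σ ^ 2) := by
            field_simp; ring
    have : -s ^ 2 / (2 * σ ^ 2) = -(s ^ 2 / (2 * σ ^ 2)) := by ring
    rw [this]
    linarith [key]
  -- assemble
  set Bad : Set Ω := {ω | c ^ 2 ≤ (∑ i ∈ Finset.univ, X i) ω} with hBad_def
  have hSm : Measurable (∑ i ∈ Finset.univ, X i) := by
    have h : (∑ i ∈ Finset.univ, X i) = fun ω => ∑ i ∈ Finset.univ, X i ω := by
      funext ω; simp [Finset.sum_apply]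
    rw [h]
    exact Finset.measurable_sum Finset.univ (fun i _ => hXm i)
  have hBadm : MeasurableSet Bad := measurableSet_le measurable_const hSm
  have hPB : ℙ Bad ≤ ENNReal.ofReal (rexp (-s ^ 2 / (2 * σ ^ 2))) := by
    have hle : (ℙ Bad).toReal ≤ rexp (-s ^ 2 / (2 * σ ^ 2)) := le_trans hcher hBle
    calc ℙ Bad = ENNReal.ofReal ((ℙ Bad).toReal) :=
          (ENNReal.ofReal_toReal (measure_ne_top _ _)).symm
      _ ≤ _ := ENNReal.ofReal_le_ofReal hle
  have hsub : Badᶜ ⊆ {ω | ‖r + n ω‖ ≤ δ} := by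
    intro ω hω
    simp only [hBad_def, Set.mem_compl_iff, Set.mem_setOf_eq, not_le] at hω
    have hSnn : 0 ≤ (∑ i ∈ Finset.univ, X i) ω := by
      rw [Finset.sum_apply]
      exact Finset.sum_nonneg fun i _ => sq_nonneg _
    have hnorm : ‖n ω‖ < c := by
      have hval : ‖n ω‖ = Real.sqrt ((∑ i ∈ Finset.univ, X i) ω) := by
        rw [EuclideanSpace.norm_eq]
        congr 1
        simp [hX_def, Finset.sum_apply, Real.norm_eq_abs, sq_abs]
      rw [hval]
      have h := Real.sqrt_lt_sqrt hSnn hω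
      rwa [Real.sqrt_sq hc0.le] at h
    simp only [Set.mem_setOf_eq]
    have := norm_add_le r (n ω)
    simp only [hc_def] at hnorm
    linarith
  have hfinal : -(δ - ‖r‖ - Real.sqrt ↑d * σ) ^ 2 / (2 * σ ^ 2) = -s ^ 2 / (2 * σ ^ 2) := by
    simp only [hs_def, hc_def, hD_def, hq_def]
  rw [hfinal]
  calc ℙ {ω | ‖r + n ω‖ ≤ δ} ≥ ℙ Badᶜ := measure_mono hsub
    _ = 1 - ℙ Bad := prob_compl_eq_one_sub hBadm
    _ ≥ ENNReal.ofReal (1 - rexp (-s ^ 2 / (2 * σ ^ 2))) := by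
        rw [ENNReal.ofReal_sub _ (Real.exp_nonneg _), ENNReal.ofReal_one]
        exact tsub_le_tsub_left hPB 1
end

section
/- Let d be a positive natural number, σ > 0, and let n be a random vector in ℝ^d whose d coordinates are independent and identically distributed Gaussian random variables with mean 0 and variance σ². Fix r ∈ ℝ^d. Then for every t > 0, P(‖r + n‖₂ > ‖r‖₂ + √d σ + t) ≤ exp(−t² / (2σ²)). -/
open MeasureTheory ProbabilityTheory Real
open scoped ENNReal NNReal


lemma lintegral_pi_pow {d : ℕ} (μ : Measure ℝ) [SigmaFinite μ] {f : ℝ → ℝ≥0∞}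
    (hf : Measurable f) :
    ∫⁻ x : Fin d → ℝ, ∏ i, f (x i) ∂Measure.pi (fun _ => μ) = (∫⁻ y, f y ∂μ) ^ d := by
  induction d with
  | zero => simp [lintegral_const, Measure.pi_univ]
  | succ n ih =>
    have hmp := measurePreserving_piFinSuccAbove (fun _ : Fin (n + 1) => μ) 0
    have hg : Measurable fun p : ℝ × (Fin n → ℝ) => f p.1 * ∏ i, f (p.2 i) :=
      (hf.comp measurable_fst).mul
        (Finset.measurable_prod _ fun i _ => hf.comp ((measurable_pi_apply i).comp measurable_snd))
    calc ∫⁻ x : Fin (n + 1) → ℝ, ∏ i, f (x i) ∂Measure.pi (fun _ => μ)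
        = ∫⁻ x : Fin (n + 1) → ℝ,
            (fun p : ℝ × (Fin n → ℝ) => f p.1 * ∏ i, f (p.2 i))
              (MeasurableEquiv.piFinSuccAbove (fun _ => ℝ) 0 x)
            ∂Measure.pi (fun _ => μ) := by
          refine lintegral_congr fun x => ?_
          simp [MeasurableEquiv.piFinSuccAbove_apply, Fin.prod_univ_succ, Fin.tail]
      _ = ∫⁻ p : ℝ × (Fin n → ℝ), f p.1 * ∏ i, f (p.2 i)
            ∂(μ.prod (Measure.pi fun _ => μ)) := by
          rw [← hmp.map_eq, lintegral_map hg (MeasurableEquiv.piFinSuccAbove _ 0).measurable]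
      _ = (∫⁻ y, f y ∂μ) * (∫⁻ y, f y ∂μ) ^ n := by
          rw [lintegral_prod_mul (f := f) (g := fun y : Fin n → ℝ => ∏ i, f (y i)) hf.aemeasurable
            (Finset.measurable_prod _ fun i _ => hf.comp (measurable_pi_apply i)).aemeasurable, ih]
      _ = (∫⁻ y, f y ∂μ) ^ (n + 1) := by ring

lemma gauss_coord (σ : ℝ) (hσ : 0 < σ) (c : ℝ) (hs : 0 < 1 - 2 * c * σ ^ 2) :
    ∫⁻ y, ENNReal.ofReal (Real.exp (c * y ^ 2)) ∂gaussianReal 0 ⟨σ ^ 2, sq_nonneg σ⟩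
      = ENNReal.ofReal (Real.sqrt (1 / (1 - 2 * c * σ ^ 2))) := by
  set v : ℝ≥0 := ⟨σ ^ 2, sq_nonneg σ⟩ with hv
  have hσ' : σ ≠ 0 := ne_of_gt hσ
  have hv0 : v ≠ 0 := by
    intro h
    apply (by positivity : σ ^ 2 ≠ 0)
    rw [show σ ^ 2 = ((v : ℝ≥0) : ℝ) from rfl, h, NNReal.coe_zero]
  have hvc : (v : ℝ) = σ ^ 2 := rfl
  set b : ℝ := 1 / (2 * σ ^ 2) - c with hb
  have hbpos : 0 < b := by
    rw [hb]
    rw [sub_pos, lt_div_iff₀ (by positivity)]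
    nlinarith
  have key : ∀ y : ℝ, gaussianPDFReal 0 v y * Real.exp (c * y ^ 2)
      = (Real.sqrt (2 * π * σ ^ 2))⁻¹ * Real.exp (-b * y ^ 2) := by
    intro y
    rw [gaussianPDFReal, hvc, mul_assoc, ← Real.exp_add]
    congr 2
    rw [hb]
    field_simp
    ring
  have hint : Integrable (fun y => gaussianPDFReal 0 v y * Real.exp (c * y ^ 2)) := by
    simp only [key]
    exact (integrable_exp_neg_mul_sq hbpos).const_mul _
  rw [gaussianReal_of_var_ne_zero _ hv0,
    lintegral_withDensity_eq_lintegral_mul _ (measurable_gaussianPDF _ _)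
      (by measurability)]
  have : ∀ y : ℝ, gaussianPDF 0 v y * ENNReal.ofReal (Real.exp (c * y ^ 2))
      = ENNReal.ofReal (gaussianPDFReal 0 v y * Real.exp (c * y ^ 2)) := fun y => by
    rw [gaussianPDF, ← ENNReal.ofReal_mul (gaussianPDFReal_nonneg _ _ _)]
  calc ∫⁻ y, gaussianPDF 0 v y * ENNReal.ofReal (Real.exp (c * y ^ 2))
      = ∫⁻ y, ENNReal.ofReal (gaussianPDFReal 0 v y * Real.exp (c * y ^ 2)) := by
        simp only [this]
    _ = ENNReal.ofReal (∫ y, gaussianPDFReal 0 v y * Real.exp (c * y ^ 2)) := by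
        rw [← ofReal_integral_eq_lintegral_ofReal hint
          (ae_of_all _ fun y => mul_nonneg (gaussianPDFReal_nonneg _ _ _) (Real.exp_nonneg _))]
    _ = ENNReal.ofReal (Real.sqrt (1 / (1 - 2 * c * σ ^ 2))) := by
        congr 1
        simp only [key]
        rw [integral_const_mul, integral_gaussian, ← Real.sqrt_inv,
          ← Real.sqrt_mul (by positivity)]
        congr 1
        have h2 : (1 - 2 * c * σ ^ 2) ≠ 0 := ne_of_gt hs
        have hb' : b ≠ 0 := ne_of_gt hbpos
        rw [hb] at hb' ⊢
        field_simp


lemma sqrt_exp_eq (x : ℝ) : Real.sqrt (Real.exp x) = Real.exp (x / 2) := by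
  have h : Real.exp (x / 2) ^ 2 = Real.exp x := by
    rw [sq, ← Real.exp_add]; ring_nf
  rw [← h, Real.sqrt_sq (Real.exp_nonneg _)]

/-- Sub-Gaussian tail bound (concentration step in the proof of Theorem 2):
if `n` is a random vector in `ℝ^d` with i.i.d. centered Gaussian coordinates of
variance `σ²` and `r ∈ ℝ^d` is fixed, then for every `t > 0`,
`P(‖r + n‖₂ > ‖r‖₂ + √d σ + t) ≤ exp(-t² / (2σ²))`. -/
theorem gaussian_shifted_norm_tail_bound
    (d : ℕ) (hd : 0 < d) (σ : ℝ) (hσ : 0 < σ)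
    (Ω : Type*) [MeasureSpace Ω] [IsProbabilityMeasure (ℙ : Measure Ω)]
    (n : Ω → EuclideanSpace ℝ (Fin d)) (hn : Measurable n)
    (hdist : Measure.map n ℙ
      = Measure.map (MeasurableEquiv.toLp 2 (Fin d → ℝ))
        (Measure.pi (fun _ : Fin d => gaussianReal 0 ⟨σ ^ 2, sq_nonneg σ⟩)))
    (r : EuclideanSpace ℝ (Fin d)) (t : ℝ) (ht : 0 < t) :
    ℙ {ω | ‖r + n ω‖ > ‖r‖ + Real.sqrt d * σ + t}
      ≤ ENNReal.ofReal (Real.exp (-t ^ 2 / (2 * σ ^ 2))) := by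
  have hσ' : σ ≠ 0 := ne_of_gt hσ
  set D : ℝ := Real.sqrt d with hDdef
  have hD : 0 < D := Real.sqrt_pos.mpr (by exact_mod_cast hd)
  have hDD : D * D = (d : ℝ) := Real.mul_self_sqrt (Nat.cast_nonneg d)
  set a : ℝ := D * σ + t with hadef
  have ha : 0 < a := by positivity
  set c : ℝ := t / (2 * σ ^ 2 * a) with hcdef
  have hc : 0 < c := by positivity
  have hs_eq : 1 - 2 * c * σ ^ 2 = D * σ / a := by
    rw [hcdef]
    field_simp
    ring
  have hs0 : 0 < 1 - 2 * c * σ ^ 2 := by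
    rw [hs_eq]; positivity
  -- per-coordinate measurable function
  have hcoordmeas : Measurable fun y : ℝ => ENNReal.ofReal (Real.exp (c * y ^ 2)) :=
    (Real.measurable_exp.comp ((measurable_id.pow_const 2).const_mul c)).ennreal_ofReal
  -- measurability of the exponential of the norm
  have hnormmeas : Measurable fun ω => ‖n ω‖ := measurable_norm.comp hn
  have hfmeas : Measurable fun ω => ENNReal.ofReal (Real.exp (c * ‖n ω‖ ^ 2)) :=
    (Real.measurable_exp.comp ((hnormmeas.pow_const 2).const_mul c)).ennreal_ofReal
  -- event inclusion
  have hsub : {ω | ‖r + n ω‖ > ‖r‖ + D * σ + t}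
      ⊆ {ω | ENNReal.ofReal (Real.exp (c * a ^ 2))
          ≤ ENNReal.ofReal (Real.exp (c * ‖n ω‖ ^ 2))} := by
    intro ω hω
    simp only [Set.mem_setOf_eq] at hω ⊢
    have h1 : a < ‖n ω‖ := by
      have := norm_add_le r (n ω)
      rw [hadef]
      linarith
    have h2 : a ^ 2 ≤ ‖n ω‖ ^ 2 := by nlinarith [norm_nonneg (n ω)]
    exact ENNReal.ofReal_le_ofReal (Real.exp_le_exp.mpr
      (mul_le_mul_of_nonneg_left h2 hc.le))
  -- the integral of the exponential
  have hI : ∫⁻ ω, ENNReal.ofReal (Real.exp (c * ‖n ω‖ ^ 2)) ∂ℙ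
      = ENNReal.ofReal (Real.sqrt (1 / (1 - 2 * c * σ ^ 2))) ^ d := by
    have hgmeas : Measurable fun x : EuclideanSpace ℝ (Fin d) =>
        ENNReal.ofReal (Real.exp (c * ‖x‖ ^ 2)) :=
      (Real.measurable_exp.comp ((measurable_norm.pow_const 2).const_mul c)).ennreal_ofReal
    have h1 : (∫⁻ ω, ENNReal.ofReal (Real.exp (c * ‖n ω‖ ^ 2)) ∂ℙ)
        = ∫⁻ x : EuclideanSpace ℝ (Fin d), ENNReal.ofReal (Real.exp (c * ‖x‖ ^ 2))
            ∂(Measure.map n ℙ) := (lintegral_map hgmeas hn).symm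
    rw [h1, hdist]
    have hprod : ∀ x : EuclideanSpace ℝ (Fin d),
        ENNReal.ofReal (Real.exp (c * ‖x‖ ^ 2))
          = ∏ i, ENNReal.ofReal (Real.exp (c * (x i) ^ 2)) := by
      intro x
      have hx : ‖x‖ ^ 2 = ∑ i, (x i) ^ 2 := by
        rw [EuclideanSpace.norm_eq, Real.sq_sqrt]
        · simp [Real.norm_eq_abs, sq_abs]
        · positivity
      rw [hx, Finset.mul_sum, Real.exp_sum, ← ENNReal.ofReal_prod_of_nonneg]
      intro i _
      exact Real.exp_nonneg _
    rw [lintegral_congr hprod]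
    rw [lintegral_map_equiv]
    change ∫⁻ x : Fin d → ℝ, ∏ i, ENNReal.ofReal (Real.exp (c * (x i) ^ 2))
      ∂Measure.pi (fun _ : Fin d => gaussianReal 0 (⟨σ ^ 2, sq_nonneg σ⟩ : ℝ≥0)) = _
    haveI := instIsProbabilityMeasureGaussianReal 0 ⟨σ ^ 2, sq_nonneg σ⟩
    rw [lintegral_pi_pow _ hcoordmeas, gauss_coord σ hσ c hs0]
  -- Markov / Chernoff
  have markov := mul_meas_ge_le_lintegral₀ (μ := ℙ) hfmeas.aemeasurable
    (ENNReal.ofReal (Real.exp (c * a ^ 2)))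
  rw [hI] at markov
  have he0 : ENNReal.ofReal (Real.exp (c * a ^ 2)) ≠ 0 := by
    simp [ENNReal.ofReal_eq_zero, not_le, Real.exp_pos]
  have heT : ENNReal.ofReal (Real.exp (c * a ^ 2)) ≠ ⊤ := ENNReal.ofReal_ne_top
  have step1 : ℙ {ω | ‖r + n ω‖ > ‖r‖ + D * σ + t}
      ≤ ENNReal.ofReal (Real.sqrt (1 / (1 - 2 * c * σ ^ 2))) ^ d
        / ENNReal.ofReal (Real.exp (c * a ^ 2)) := by
    refine le_trans (measure_mono hsub) ?_
    rw [ENNReal.le_div_iff_mul_le (Or.inl he0) (Or.inl heT), mul_comm]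
    exact markov
  refine le_trans step1 ?_
  rw [← ENNReal.ofReal_pow (Real.sqrt_nonneg _),
    ← ENNReal.ofReal_div_of_pos (Real.exp_pos _)]
  apply ENNReal.ofReal_le_ofReal
  -- the real inequality
  rw [div_le_iff₀ (Real.exp_pos _)]
  have hb1 : Real.sqrt (1 / (1 - 2 * c * σ ^ 2)) ≤ Real.exp (t / (2 * (D * σ))) := by
    have h1s : 1 / (1 - 2 * c * σ ^ 2) = 1 + t / (D * σ) := by
      rw [hs_eq]
      field_simp
      exact hadef
    rw [h1s]
    calc Real.sqrt (1 + t / (D * σ)) ≤ Real.sqrt (Real.exp (t / (D * σ))) := by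
          apply Real.sqrt_le_sqrt
          linarith [Real.add_one_le_exp (t / (D * σ))]
      _ = Real.exp (t / (D * σ) / 2) := sqrt_exp_eq _
      _ = Real.exp (t / (2 * (D * σ))) := by ring_nf
  calc Real.sqrt (1 / (1 - 2 * c * σ ^ 2)) ^ d
      ≤ Real.exp (t / (2 * (D * σ))) ^ d :=
        pow_le_pow_left₀ (Real.sqrt_nonneg _) hb1 d
    _ = Real.exp ((d : ℝ) * (t / (2 * (D * σ)))) := by
        rw [Real.exp_nat_mul]
    _ = Real.exp (-t ^ 2 / (2 * σ ^ 2)) * Real.exp (c * a ^ 2) := by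
        rw [← Real.exp_add]
        congr 1
        rw [← hDD, hcdef, hadef]
        field_simp
        ring
end

section
/- Let d be a positive natural number, σ > 0, let P : ℝ^d → ℝ^d be a linear map, let μ ∈ ℝ^d, and let α be a real scalar with α > 0. Let n be a random vector in ℝ^d whose d coordinates are independent and identically distributed Gaussian random variables with mean 0 and variance σ², and set r = (1 − α) • (P μ). Then for any threshold δ with δ > |1 − α| · ‖P μ‖₂ + √d · σ, the probability that the covert attack remains undetected satisfies P(‖r + n‖₂ ≤ δ) ≥ 1 − exp(−(δ − |1 − α| · ‖P μ‖₂ − √d σ)² / (2σ²)). -/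
open MeasureTheory ProbabilityTheory

open Real
open scoped ENNReal NNReal

lemma my_pi_integral {ι : Type*} [Fintype ι] {E : Type*} [MeasurableSpace E]
    (m : Measure E) [SigmaFinite m] (f : E → ℝ) :
    ∫ x : ι → E, ∏ i, f (x i) ∂(Measure.pi fun _ => m) = (∫ x, f x ∂m) ^ (Fintype.card ι) := by
  letI : MeasureSpace E := ⟨m⟩
  exact MeasureTheory.integral_fintype_prod_eq_pow (ι := ι) f

lemma my_pi_integrable {ι : Type*} [Fintype ι] {E : Type*} [MeasurableSpace E]
    (m : Measure E) [SigmaFinite m] {f : E → ℝ} (hf : Integrable f m) :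
    Integrable (fun x : ι → E => ∏ i, f (x i)) (Measure.pi fun _ => m) := by
  letI : MeasureSpace E := ⟨m⟩
  exact Integrable.fintype_prod (fun _ => hf)

lemma gauss_pdf_mul (σ : ℝ) (hσ : 0 < σ) (c : ℝ) (x : ℝ) :
    gaussianPDFReal 0 ⟨σ^2, sq_nonneg σ⟩ x * Real.exp (c * x^2)
      = (Real.sqrt (2*π*σ^2))⁻¹ * Real.exp (-((2*σ^2)⁻¹ - c) * x^2) := by
  unfold gaussianPDFReal
  change (Real.sqrt (2*π*σ^2))⁻¹ * Real.exp (-(x - 0)^2 / (2*σ^2)) * Real.exp (c*x^2) = _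
  simp only [NNReal.coe_mk, one_div, sub_zero]
  rw [mul_assoc, ← Real.exp_add]
  congr 2
  field_simp
  ring

lemma gauss_sq_integral (σ : ℝ) (hσ : 0 < σ) {c : ℝ} (hc : c < (2*σ^2)⁻¹) :
    ∫ x, Real.exp (c * x^2) ∂(gaussianReal 0 ⟨σ^2, sq_nonneg σ⟩)
      = (Real.sqrt (1 - 2*c*σ^2))⁻¹ := by
  have hσ2 : (0:ℝ) < σ^2 := by positivity
  have hv : (⟨σ^2, sq_nonneg σ⟩ : NNReal) ≠ 0 := by
    simp [← NNReal.coe_ne_zero, hσ2.ne']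
  set b : ℝ := (2*σ^2)⁻¹ - c with hb
  have hb0 : 0 < b := by simpa [hb] using hc
  rw [gaussianReal_of_var_ne_zero _ hv]
  have hpdf : gaussianPDF 0 ⟨σ^2, sq_nonneg σ⟩
      = fun x => ((Real.toNNReal (gaussianPDFReal 0 ⟨σ^2, sq_nonneg σ⟩ x)) : ℝ≥0∞) := rfl
  erw [hpdf, integral_withDensity_eq_integral_smul
    ((measurable_gaussianPDFReal 0 _).real_toNNReal) _]
  have heq : ∀ x : ℝ, (Real.toNNReal (gaussianPDFReal 0 ⟨σ^2, sq_nonneg σ⟩ x)) • Real.exp (c * x^2)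
      = (Real.sqrt (2*π*σ^2))⁻¹ * Real.exp (-b * x^2) := by
    intro x
    erw [NNReal.smul_def, smul_eq_mul, Real.coe_toNNReal _ (gaussianPDFReal_nonneg _ _ _)]
    exact gauss_pdf_mul σ hσ c x
  simp_rw [heq]
  rw [integral_const_mul, integral_gaussian]
  rw [← Real.sqrt_inv, ← Real.sqrt_mul (by positivity)]
  have h1 : 1 - 2*c*σ^2 = 2*σ^2*b := by rw [hb]; field_simp
  rw [show (2*π*σ^2)⁻¹ * (π / b) = (1 - 2*c*σ^2)⁻¹ by
    rw [h1]; rw [eq_comm, inv_eq_iff_eq_inv, eq_comm, inv_eq_iff_eq_inv]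
    field_simp]
  exact Real.sqrt_inv _

lemma gauss_sq_integrable (σ : ℝ) (hσ : 0 < σ) {c : ℝ} (hc : c < (2*σ^2)⁻¹) :
    Integrable (fun x => Real.exp (c * x^2)) (gaussianReal 0 ⟨σ^2, sq_nonneg σ⟩) := by
  have hσ2 : (0:ℝ) < σ^2 := by positivity
  have hv : (⟨σ^2, sq_nonneg σ⟩ : NNReal) ≠ 0 := by
    simp [← NNReal.coe_ne_zero, hσ2.ne']
  set b : ℝ := (2*σ^2)⁻¹ - c with hb
  have hb0 : 0 < b := by simpa [hb] using hc
  rw [gaussianReal_of_var_ne_zero _ hv]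
  erw [integrable_withDensity_iff (measurable_gaussianPDF 0 _)
    (ae_of_all _ fun x => ENNReal.ofReal_lt_top)]
  have heq : ∀ x : ℝ, Real.exp (c * x^2) * (gaussianPDF 0 ⟨σ^2, sq_nonneg σ⟩ x).toReal
      = (Real.sqrt (2*π*σ^2))⁻¹ * Real.exp (-b * x^2) := by
    intro x
    unfold gaussianPDF
    erw [ENNReal.toReal_ofReal (gaussianPDFReal_nonneg _ _ _), mul_comm]
    exact gauss_pdf_mul σ hσ c x
  simp_rw [heq]
  exact (integrable_exp_neg_mul_sq hb0).const_mul _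

lemma final_ineq (d : ℕ) (hd : 0 < d) (σ t : ℝ) (hσ : 0 < σ)
    (ht : Real.sqrt d * σ < t) :
    Real.exp (-((t^2 - d*σ^2)/(2*σ^2*t^2)) * t^2) * (t/(Real.sqrt d * σ))^d
      ≤ Real.exp (-(t - Real.sqrt d * σ)^2 / (2*σ^2)) := by
  set s : ℝ := Real.sqrt d * σ with hsdef
  have hdpos : (0:ℝ) < d := Nat.cast_pos.mpr hd
  have hs : 0 < s := by positivity
  have ht0 : 0 < t := hs.trans ht
  have hs2 : s^2 = d * σ^2 := by
    rw [hsdef, mul_pow, Real.sq_sqrt hdpos.le]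
  have hd2 : (d:ℝ) = s^2/σ^2 := by rw [hs2]; field_simp
  have hts : 0 < t/s := by positivity
  have hpow : (t/s)^d = Real.exp (d * Real.log (t/s)) := by
    rw [Real.exp_nat_mul, Real.exp_log hts]
  rw [hpow, ← Real.exp_add, Real.exp_le_exp]
  have hlog : (d:ℝ) * Real.log (t/s) ≤ d * (t/s - 1) :=
    mul_le_mul_of_nonneg_left (Real.log_le_sub_one_of_pos hts) hdpos.le
  have hkey : -((t^2 - d*σ^2)/(2*σ^2*t^2)) * t^2 + (d:ℝ) * (t/s - 1)
      = -(t - s)^2 / (2*σ^2) := by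
    rw [hd2]
    field_simp
    ring
  linarith

/-- Lemma 1 combined with Theorem 2: the attacker models the true plant `P` by
`α • P` with `α > 0`, injects the covert input `μ`, and the resulting residual
is `r = (1 - α) • (P μ)`. With additive i.i.d. Gaussian noise `n` of
coordinatewise variance `σ²`, for any threshold `δ > |1 - α| * ‖P μ‖₂ + √d * σ`
the attack remains undetected with probability at least
`1 - exp(-(δ - |1 - α| * ‖P μ‖₂ - √d σ)² / (2σ²))`. -/
theorem covert_attack_stealth_probability
    (d : ℕ) (hd : 0 < d) (σ : ℝ) (hσ : 0 < σ)
    (P : EuclideanSpace ℝ (Fin d) →ₗ[ℝ] EuclideanSpace ℝ (Fin d))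
    (μ : EuclideanSpace ℝ (Fin d)) (α : ℝ) (hα : 0 < α)
    (Ω : Type*) [MeasureSpace Ω] [IsProbabilityMeasure (ℙ : Measure Ω)]
    (n : Ω → EuclideanSpace ℝ (Fin d)) (hn : Measurable n)
    (hdist : Measure.map n ℙ
      = Measure.map (WithLp.toLp 2) (Measure.pi (fun _ : Fin d => gaussianReal 0 ⟨σ ^ 2, sq_nonneg σ⟩)))
    (r : EuclideanSpace ℝ (Fin d)) (hr : r = (1 - α) • (P μ))
    (δ : ℝ) (hδ : δ > |1 - α| * ‖P μ‖ + Real.sqrt d * σ) :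
    ℙ {ω | ‖r + n ω‖ ≤ δ}
      ≥ ENNReal.ofReal
          (1 - Real.exp
            (-(δ - |1 - α| * ‖P μ‖ - Real.sqrt d * σ) ^ 2 / (2 * σ ^ 2))) := by
  have hdpos : (0:ℝ) < d := Nat.cast_pos.mpr hd
  set s : ℝ := Real.sqrt d * σ with hsdef
  have hs : 0 < s := by positivity
  set t : ℝ := δ - |1 - α| * ‖P μ‖ with htdef
  have hts : s < t := by rw [htdef]; linarith [hδ]
  have ht0 : 0 < t := hs.trans hts
  have hs2 : s^2 = d * σ^2 := by rw [hsdef, mul_pow, Real.sq_sqrt hdpos.le]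
  set c : ℝ := (t^2 - (d:ℝ)*σ^2)/(2*σ^2*t^2) with hcdef
  have hc0 : 0 ≤ c := by
    apply div_nonneg _ (by positivity)
    nlinarith [hs2]
  have hcb : c < (2*σ^2)⁻¹ := by
    rw [hcdef, div_lt_iff₀ (by positivity : (0:ℝ) < 2*σ^2*t^2)]
    have h2 : (2*σ^2)⁻¹ * (2*σ^2*t^2) = t^2 := by field_simp
    rw [h2]
    nlinarith [hs2]
  -- scalar integral value
  have hI : ∫ x, Real.exp (c*x^2) ∂(gaussianReal 0 ⟨σ^2, sq_nonneg σ⟩) = t/s := by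
    rw [gauss_sq_integral σ hσ hcb]
    have h1 : 1 - 2*c*σ^2 = (s/t)^2 := by
      rw [hcdef, ← hs2]
      field_simp
      ring
    rw [h1, Real.sqrt_sq (by positivity), inv_div]
  set ν : Measure (EuclideanSpace ℝ (Fin d)) :=
    Measure.map (WithLp.toLp 2) (Measure.pi (fun _ : Fin d => gaussianReal 0 ⟨σ^2, sq_nonneg σ⟩)) with hνdef
  haveI hνP : IsProbabilityMeasure ν := hdist ▸ Measure.isProbabilityMeasure_map hn.aemeasurable
  have hXm : Measurable fun x : EuclideanSpace ℝ (Fin d) => ∑ i, (x i)^2 :=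
    Finset.measurable_sum _ fun i _ => ((measurable_pi_apply i).comp (WithLp.measurable_ofLp _ _)).pow_const 2
  have hprodeq : (fun x : EuclideanSpace ℝ (Fin d) => Real.exp (c * ∑ i, (x i)^2))
      = fun x => ∏ i : Fin d, Real.exp (c * (x i)^2) := by
    funext x
    rw [Finset.mul_sum, Real.exp_sum]
  have hint : Integrable (fun x : EuclideanSpace ℝ (Fin d) =>
      Real.exp (c * ∑ i, (x i)^2)) ν := by
    haveI : IsProbabilityMeasure (gaussianReal 0 ⟨σ^2, sq_nonneg σ⟩) :=
      instIsProbabilityMeasureGaussianReal 0 ⟨σ^2, sq_nonneg σ⟩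
    rw [hprodeq, hνdef, ← MeasurableEquiv.coe_toLp, integrable_map_equiv]
    exact my_pi_integrable (ι := Fin d) _ (gauss_sq_integrable σ hσ hcb)
  have chern := measure_ge_le_exp_mul_mgf (μ := ν)
    (X := fun x => ∑ i, (x i)^2) (t := c) (t^2) hc0 hint
  have hmgf : mgf (fun x : EuclideanSpace ℝ (Fin d) => ∑ i, (x i)^2) ν c = (t/s)^d := by
    rw [mgf]
    calc (∫ x, Real.exp (c * ∑ i, (x i)^2) ∂ν)
        = ∫ x : EuclideanSpace ℝ (Fin d), ∏ i : Fin d, Real.exp (c*(x i)^2) ∂ν := by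
          rw [hprodeq]
      _ = (∫ y, Real.exp (c*y^2) ∂(gaussianReal 0 ⟨σ^2, sq_nonneg σ⟩))
            ^ (Fintype.card (Fin d)) := by
          rw [hνdef, ← MeasurableEquiv.coe_toLp, integral_map_equiv]
          haveI : IsProbabilityMeasure (gaussianReal 0 ⟨σ^2, sq_nonneg σ⟩) :=
            instIsProbabilityMeasureGaussianReal 0 ⟨σ^2, sq_nonneg σ⟩
          have h : ∫ x : Fin d → ℝ, ∏ i, Real.exp (c * (x i)^2)
              ∂(Measure.pi fun _ => gaussianReal 0 ⟨σ^2, sq_nonneg σ⟩)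
              = (∫ y, Real.exp (c*y^2) ∂(gaussianReal 0 ⟨σ^2, sq_nonneg σ⟩))
                ^ (Fintype.card (Fin d)) :=
            my_pi_integral _ (fun y => Real.exp (c*y^2))
          exact h
      _ = (t/s)^d := by rw [hI, Fintype.card_fin]
  have htail : ν {x : EuclideanSpace ℝ (Fin d) | t^2 ≤ ∑ i, (x i)^2}
      ≤ ENNReal.ofReal (Real.exp (-(t-s)^2/(2*σ^2))) := by
    rw [ENNReal.le_ofReal_iff_toReal_le (measure_ne_top _ _) (Real.exp_nonneg _)]
    refine chern.trans ?_
    rw [hmgf]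
    exact final_ineq d hd σ t hσ hts
  have hnorm_meas : Measurable fun ω => ‖r + n ω‖ :=
    ((continuous_add_left r).measurable.comp hn).norm
  have hSmeas : MeasurableSet {ω | ‖r + n ω‖ ≤ δ} :=
    measurableSet_le hnorm_meas measurable_const
  have hAmeas : MeasurableSet {x : EuclideanSpace ℝ (Fin d) | t^2 ≤ ∑ i, (x i)^2} :=
    measurableSet_le measurable_const hXm
  have hr' : ‖r‖ = |1 - α| * ‖P μ‖ := by rw [hr, norm_smul, Real.norm_eq_abs]
  have hcompl : {ω | ‖r + n ω‖ ≤ δ}ᶜ ⊆ {ω | t^2 ≤ ∑ i, (n ω i)^2} := by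
    intro ω hω
    simp only [Set.mem_compl_iff, Set.mem_setOf_eq, not_le] at hω
    have h1 : t < ‖n ω‖ := by
      have h2 := norm_add_le r (n ω)
      rw [hr'] at h2
      rw [htdef]
      linarith
    have h2 : ‖n ω‖^2 = ∑ i, (n ω i)^2 := by
      rw [EuclideanSpace.norm_eq, Real.sq_sqrt (Finset.sum_nonneg fun i _ => sq_nonneg _)]
      simp [Real.norm_eq_abs, sq_abs]
    have h3 : t^2 ≤ ‖n ω‖^2 := by nlinarith
    simpa [Set.mem_setOf_eq, ← h2] using h3
  have hmap : ℙ {ω | t^2 ≤ ∑ i, (n ω i)^2}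
      = ν {x : EuclideanSpace ℝ (Fin d) | t^2 ≤ ∑ i, (x i)^2} := by
    rw [← hdist, Measure.map_apply hn hAmeas]
    rfl
  have hcomp : ℙ {ω | ‖r + n ω‖ ≤ δ}ᶜ
      ≤ ENNReal.ofReal (Real.exp (-(t-s)^2/(2*σ^2))) := by
    calc ℙ {ω | ‖r + n ω‖ ≤ δ}ᶜ
        ≤ ℙ {ω | t^2 ≤ ∑ i, (n ω i)^2} := measure_mono hcompl
      _ = ν {x : EuclideanSpace ℝ (Fin d) | t^2 ≤ ∑ i, (x i)^2} := hmap
      _ ≤ _ := htail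
  have hexpr : δ - |1 - α| * ‖P μ‖ - Real.sqrt d * σ = t - s := by rw [htdef, hsdef]
  rw [ge_iff_le, hexpr, ENNReal.ofReal_sub _ (Real.exp_nonneg _), ENNReal.ofReal_one]
  calc 1 - ENNReal.ofReal (Real.exp (-(t-s)^2/(2*σ^2)))
      ≤ 1 - ℙ {ω | ‖r + n ω‖ ≤ δ}ᶜ := tsub_le_tsub_left hcomp 1
    _ = ℙ {ω | ‖r + n ω‖ ≤ δ} := by
        rw [prob_compl_eq_one_sub hSmeas,
          ENNReal.sub_sub_cancel ENNReal.one_ne_top prob_le_one]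
end
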